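/- arXiv:math/0610604 — 3 statements merged into one kernel-verified Lean document; each statement's English description precedes it below -/
import Mathlib

section
/- Let $\Lambda' \subseteq \mathbb{R}^{d-1}$ and $\Lambda \subseteq \mathbb{R}^d$ be full-rank lattices with $\Lambda' \subseteq \Lambda$ (regarding $\mathbb{R}^{d-1} \subseteq \mathbb{R}^d$ in the standard way). Let $\alpha' \in \mathbb{R}^{d-1}$, $\alpha \in \mathbb{R}^d$ with $\alpha - \alpha' \in \Lambda$, and let $N > 0$. Then $F_{\Lambda,\alpha}(N) \ge \frac{\det(\Lambda)}{\det(\Lambda')} F_{\Lambda',\alpha'}(N)$. -/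
open Real Finset

/-- The squared Euclidean norm on `ℝ^d`. -/
noncomputable def normSq {d : ℕ} (v : Fin d → ℝ) : ℝ := ∑ i, v i ^ 2

/-- The point of the lattice `B·ℤ^d` with coordinates `m`. -/
noncomputable def latticePt {d : ℕ} (B : Matrix (Fin d) (Fin d) ℝ) (m : Fin d → ℤ) :
    Fin d → ℝ := B.mulVec (fun i => (m i : ℝ))

/-- `F_{Λ,α}(N) = det(Λ) 𝔼_{-N ≤ n ≤ N} ∑_{m ∈ Λ} e^{-π|n²α - m|²}` for the lattice
`Λ = B·ℤ^d`, the expectation being the average over integers `n ∈ [-N, N]`. -/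
noncomputable def latticeF {d : ℕ} (B : Matrix (Fin d) (Fin d) ℝ) (α : Fin d → ℝ)
    (N : ℝ) : ℝ :=
  |B.det| * (∑ n ∈ Finset.Icc ⌈-N⌉ ⌊N⌋, ∑' m : Fin d → ℤ,
      Real.exp (-π * normSq (fun i => (n : ℝ) ^ 2 * α i - latticePt B m i))) /
    (Finset.Icc ⌈-N⌉ ⌊N⌋).card

/-- The standard embedding `ℝ^d → ℝ^{d+1}` (last coordinate zero). -/
noncomputable def embed {d : ℕ} (v : Fin d → ℝ) : Fin (d + 1) → ℝ :=
  fun i => if h : (i : ℕ) < d then v ⟨i, h⟩ else 0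

lemma summable_int_exp (b : ℝ) (hb : 0 < b) :
    Summable fun k : ℤ => Real.exp (-b * |(k : ℝ)|) := by
  have hgeo : Summable fun n : ℕ => Real.exp (-b) ^ n :=
    summable_geometric_of_lt_one (Real.exp_pos _).le
      (Real.exp_lt_one_iff.mpr (by linarith))
  apply Summable.of_nat_of_neg <;>
  · apply hgeo.congr
    intro n
    rw [← Real.exp_nat_mul]
    congr 1
    push_cast [abs_neg, Nat.abs_cast]
    ring

lemma summable_prod_exp (n : ℕ) (b : ℝ) (hb : 0 < b) :
    Summable fun m : Fin n → ℤ => ∏ i, Real.exp (-b * |(m i : ℝ)|) := by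
  induction n with
  | zero => exact summable_of_finite_support (Set.toFinite _)
  | succ n ih =>
    have := ((summable_int_exp b hb).mul_of_nonneg ih
      (fun _ => (Real.exp_pos _).le)
      (fun _ => Finset.prod_nonneg fun _ _ => (Real.exp_pos _).le))
    apply (this.comp_injective (Fin.consEquiv fun _ => ℤ).symm.injective).congr
    intro m
    simp only [Function.comp]
    rw [Fin.prod_univ_succ]
    rfl

lemma summable_gauss (n : ℕ) (B : Matrix (Fin n) (Fin n) ℝ) (hB : B.det ≠ 0) (c : Fin n → ℝ) :
    Summable fun m : Fin n → ℤ =>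
      Real.exp (-π * normSq (fun i => c i - latticePt B m i)) := by
  rcases Nat.eq_zero_or_pos n with hn | hn
  · subst hn; exact summable_of_finite_support (Set.toFinite _)
  -- inverse matrix control
  have hTB : ∀ x : Fin n → ℝ, B⁻¹.mulVec (B.mulVec x) = x := by
    intro x
    rw [Matrix.mulVec_mulVec, Matrix.nonsing_inv_mul B (isUnit_iff_ne_zero.mpr hB),
      Matrix.one_mulVec]
  set L := LinearMap.toContinuousLinearMap (Matrix.mulVecLin B⁻¹) with hL
  have hK : ∀ y : Fin n → ℝ, ‖B⁻¹.mulVec y‖ ≤ ‖L‖ * ‖y‖ := fun y => L.le_opNorm y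
  set K1 : ℝ := ‖L‖ + 1 with hK1def
  have hK1 : 0 < K1 := by positivity
  set C : ℝ := ‖c‖ with hC
  have hC0 : 0 ≤ C := norm_nonneg _
  set b : ℝ := π / (K1 * n) with hbdef
  have hb : 0 < b := by positivity
  have key : ∀ m : Fin n → ℤ,
      Real.exp (-π * normSq (fun i => c i - latticePt B m i)) ≤
        Real.exp (π * (C + 1)) * ∏ i, Real.exp (-b * |(m i : ℝ)|) := by
    intro m
    set v : Fin n → ℝ := fun i => c i - latticePt B m i with hv
    set Q : ℝ := normSq v with hQ
    have hQ0 : 0 ≤ Q := Finset.sum_nonneg fun i _ => sq_nonneg _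
    have hvQ : ‖v‖ ≤ Real.sqrt Q := by
      rw [pi_norm_le_iff_of_nonneg (Real.sqrt_nonneg _)]
      intro i
      rw [Real.norm_eq_abs, ← Real.sqrt_sq_eq_abs (v i)]
      exact Real.sqrt_le_sqrt (Finset.single_le_sum (fun j _ => sq_nonneg (v j)) (mem_univ i))
    have hmB : B.mulVec (fun i => (m i : ℝ)) = c - v := by
      funext i; simp [hv, latticePt, Pi.sub_apply]
    set M : ℝ := ‖(fun i => (m i : ℝ))‖ with hM
    have hMb : M ≤ K1 * (C + Real.sqrt Q) := by
      have h1 : M = ‖B⁻¹.mulVec (c - v)‖ := by rw [← hmB, hTB]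
      have h2 : ‖c - v‖ ≤ C + Real.sqrt Q := le_trans (norm_sub_le _ _) (by linarith)
      calc M ≤ ‖L‖ * ‖c - v‖ := h1 ▸ hK _
        _ ≤ K1 * (C + Real.sqrt Q) := by
            apply mul_le_mul (by simp [hK1def]) h2 (norm_nonneg _) hK1.le
    have hsum : ∑ i, |(m i : ℝ)| ≤ n * M := by
      calc ∑ i, |(m i : ℝ)| ≤ ∑ _i : Fin n, M :=
            Finset.sum_le_sum fun i _ => by
              simpa [Real.norm_eq_abs] using norm_le_pi_norm (fun j => ((m j : ℝ))) i
        _ = n * M := by simp [mul_comm]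
    -- combine
    rw [← Real.exp_sum, ← Real.exp_add]
    apply Real.exp_le_exp.mpr
    have hsq : Real.sqrt Q ≤ 1 + Q := by
      nlinarith [Real.sq_sqrt hQ0, Real.sqrt_nonneg Q]
    have hM' : (π / K1) * M ≤ π * (C + Real.sqrt Q) := by
      rw [div_mul_eq_mul_div, div_le_iff₀ hK1]
      nlinarith [pi_pos]
    have h3 : b * ∑ i, |(m i : ℝ)| ≤ b * (n * M) :=
      mul_le_mul_of_nonneg_left hsum hb.le
    have h4 : b * ((n : ℝ) * M) = (π / K1) * M := by
      rw [hbdef]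
      field_simp
    have h6 := mul_le_mul_of_nonneg_left hsq pi_pos.le
    have h5 : ∑ i, -b * |(m i : ℝ)| = -(b * ∑ i, |(m i : ℝ)|) := by
      rw [Finset.mul_sum]; simp [neg_mul]
    rw [h5]
    linarith
  apply Summable.of_nonneg_of_le (fun m => (Real.exp_pos _).le) key
  exact (summable_prod_exp n b hb).mul_left _


lemma embed_castSucc {d : ℕ} (v : Fin d → ℝ) (i : Fin d) :
    embed v (Fin.castSucc i) = v i := by
  simp only [embed, Fin.coe_castSucc]
  rw [dif_pos i.isLt]

lemma embed_last {d : ℕ} (v : Fin d → ℝ) : embed v (Fin.last d) = 0 := by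
  simp [embed]

lemma normSq_embed {d : ℕ} (w : Fin d → ℝ) : normSq (embed w) = normSq w := by
  unfold normSq
  rw [Fin.sum_univ_castSucc]
  simp [embed_castSucc, embed_last]

lemma embed_comb {d : ℕ} (a : ℝ) (x y : Fin d → ℝ) (i : Fin (d + 1)) :
    a * embed x i - embed y i = embed (fun j => a * x j - y j) i := by
  by_cases h : (i : ℕ) < d <;> simp [embed, h]

theorem tsum_step (d : ℕ) (B : Matrix (Fin (d + 1)) (Fin (d + 1)) ℝ) (hB : B.det ≠ 0)
    (B' : Matrix (Fin d) (Fin d) ℝ) (hB' : B'.det ≠ 0)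
    (hsub : ∀ m : Fin d → ℤ, ∃ m' : Fin (d + 1) → ℤ,
      embed (latticePt B' m) = latticePt B m')
    (α : Fin (d + 1) → ℝ) (α' : Fin d → ℝ)
    (hα : ∃ m : Fin (d + 1) → ℤ, (fun i => α i - embed α' i) = latticePt B m)
    (n : ℤ) :
    (∑' m : Fin d → ℤ,
        Real.exp (-π * normSq (fun i => (n : ℝ) ^ 2 * α' i - latticePt B' m i))) ≤
      ∑' m' : Fin (d + 1) → ℤ,
        Real.exp (-π * normSq (fun i => (n : ℝ) ^ 2 * α i - latticePt B m' i)) := by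
  classical
  obtain ⟨m₀, hm₀⟩ := hα
  have hBinj : Function.Injective (B.mulVec : (Fin (d + 1) → ℝ) → _) :=
    Matrix.mulVec_injective_iff_isUnit.mpr
      ((Matrix.isUnit_iff_isUnit_det _).mpr (isUnit_iff_ne_zero.mpr hB))
  have hB'inj : Function.Injective (B'.mulVec : (Fin d → ℝ) → _) :=
    Matrix.mulVec_injective_iff_isUnit.mpr
      ((Matrix.isUnit_iff_isUnit_det _).mpr (isUnit_iff_ne_zero.mpr hB'))
  set ι : (Fin d → ℤ) → (Fin (d + 1) → ℤ) :=
    fun m => fun i => Classical.choose (hsub m) i + n ^ 2 * m₀ i with hι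
  have hιpt : ∀ m : Fin d → ℤ, latticePt B (ι m) =
      fun i => embed (latticePt B' m) i + (n : ℝ) ^ 2 * latticePt B m₀ i := by
    intro m
    have hcast : (fun i => ((ι m i : ℤ) : ℝ)) =
        (fun i => (Classical.choose (hsub m) i : ℝ)) +
          ((n : ℝ) ^ 2) • (fun i => (m₀ i : ℝ)) := by
      funext i
      simp only [hι, Pi.add_apply, Pi.smul_apply, smul_eq_mul]
      push_cast
      ring
    have hch := Classical.choose_spec (hsub m)
    simp only [latticePt] at hch
    funext i
    simp only [latticePt, hcast, Matrix.mulVec_add, Matrix.mulVec_smul, Pi.add_apply,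
      Pi.smul_apply, smul_eq_mul]
    rw [← hch]
  have hinj : Function.Injective ι := by
    intro m1 m2 h
    have h1 : latticePt B (ι m1) = latticePt B (ι m2) := by rw [h]
    rw [hιpt m1, hιpt m2] at h1
    have h2 : embed (latticePt B' m1) = embed (latticePt B' m2) := by
      funext i
      have := congrFun h1 i
      linarith
    have h3 : latticePt B' m1 = latticePt B' m2 := by
      funext i
      have := congrFun h2 (Fin.castSucc i)
      rwa [embed_castSucc, embed_castSucc] at this
    have h4 : (fun i => ((m1 i : ℤ) : ℝ)) = fun i => ((m2 i : ℤ) : ℝ) := hB'inj h3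
    funext i
    exact_mod_cast congrFun h4 i
  apply Summable.tsum_le_tsum_of_inj ι hinj (fun c _ => (Real.exp_pos _).le)
    (fun m => le_of_eq ?_) (summable_gauss d B' hB' _) (summable_gauss (d + 1) B hB _)
  congr 1
  congr 1
  rw [← normSq_embed (fun i => (n : ℝ) ^ 2 * α' i - latticePt B' m i)]
  congr 1
  funext i
  rw [hιpt m, ← hm₀]
  simp only
  rw [← embed_comb]
  ring


/-- **Descent lemma.** If `Λ' ⊆ ℝ^{d}` and `Λ ⊆ ℝ^{d+1}` are full-rank lattices with
`Λ' ⊆ Λ` (under the standard embedding), and `α - α' ∈ Λ`, then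
`F_{Λ,α}(N) ≥ (det Λ / det Λ') F_{Λ',α'}(N)`. -/
theorem stmt_8 (d : ℕ) (B : Matrix (Fin (d + 1)) (Fin (d + 1)) ℝ) (hB : B.det ≠ 0)
    (B' : Matrix (Fin d) (Fin d) ℝ) (hB' : B'.det ≠ 0)
    (hsub : ∀ m : Fin d → ℤ, ∃ m' : Fin (d + 1) → ℤ,
      embed (latticePt B' m) = latticePt B m')
    (α : Fin (d + 1) → ℝ) (α' : Fin d → ℝ)
    (hα : ∃ m : Fin (d + 1) → ℤ, (fun i => α i - embed α' i) = latticePt B m)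
    (N : ℕ) (hN : 0 < N) :
    latticeF B α N ≥ (|B.det| / |B'.det|) * latticeF B' α' N := by
  have hmem : (0 : ℤ) ∈ Finset.Icc ⌈-((N : ℕ) : ℝ)⌉ ⌊((N : ℕ) : ℝ)⌋ := by
    rw [Finset.mem_Icc]
    constructor
    · rw [Int.ceil_le]
      push_cast
      simp
    · rw [Int.le_floor]
      push_cast
      simp
  have hcard : 0 < ((Finset.Icc ⌈-((N : ℕ) : ℝ)⌉ ⌊((N : ℕ) : ℝ)⌋).card : ℝ) := by
    exact_mod_cast Finset.card_pos.mpr ⟨0, hmem⟩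
  unfold latticeF
  set c : ℝ := ((Finset.Icc ⌈-((N : ℕ) : ℝ)⌉ ⌊((N : ℕ) : ℝ)⌋).card : ℝ) with hc
  set S : ℝ := ∑ n ∈ Finset.Icc ⌈-((N : ℕ) : ℝ)⌉ ⌊((N : ℕ) : ℝ)⌋, ∑' m : Fin (d + 1) → ℤ,
      Real.exp (-π * normSq (fun i => (n : ℝ) ^ 2 * α i - latticePt B m i)) with hS
  set S' : ℝ := ∑ n ∈ Finset.Icc ⌈-((N : ℕ) : ℝ)⌉ ⌊((N : ℕ) : ℝ)⌋, ∑' m : Fin d → ℤ,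
      Real.exp (-π * normSq (fun i => (n : ℝ) ^ 2 * α' i - latticePt B' m i)) with hS'
  have hSS : S' ≤ S :=
    Finset.sum_le_sum fun n _ => tsum_step d B hB B' hB' hsub α α' hα n
  have hBd : 0 < |B.det| := abs_pos.mpr hB
  have hB'd : 0 < |B'.det| := abs_pos.mpr hB'
  have heq : |B.det| / |B'.det| * (|B'.det| * S' / c) = |B.det| * S' / c := by
    field_simp
  rw [ge_iff_le, heq]
  gcongr
end

section
/- Let $\Lambda \subseteq \mathbb{R}^d$ be a full-rank lattice, $\alpha \in \mathbb{R}^d$, $N \ge 1$ an integer, and $c \in (10/N, 1)$. Then $F_{\Lambda,\alpha}(N) \ge c' \cdot c \cdot F_{\Lambda,\alpha}(cN)$ for some absolute constant $c' > 0$. Moreover, for any integer $q \ge 1$, $F_{\Lambda,\alpha}(N) \ge \frac{c''}{q} F_{\Lambda, q^2\alpha}(N/q)$ for some absolute constant $c'' > 0$. -/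
open Real Finset

lemma key_ineq (A s S D D' t : ℝ) (hA : 0 ≤ A) (hs : 0 ≤ s) (hsS : s ≤ S)
    (hD : 0 < D) (hD' : 0 < D') (ht : 0 ≤ t) (h : t * D ≤ D') :
    t * (A * s / D') ≤ A * S / D := by
  have h1 : t * (A * s / D') ≤ A * s / D := by
    rw [mul_div_assoc', div_le_div_iff₀ hD' hD]
    nlinarith [mul_le_mul_of_nonneg_left h (mul_nonneg hA hs)]
  calc t * (A * s / D') ≤ A * s / D := h1
    _ ≤ A * S / D := by gcongr

lemma card_Icc_neg_real (a : ℤ) (ha : 0 ≤ a) :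
    (((Finset.Icc (-a) a).card : ℝ)) = 2 * (a : ℝ) + 1 := by
  rw [Int.card_Icc, show a + 1 - -a = 2 * a + 1 by ring]
  rw [show ((((2 * a + 1).toNat : ℕ)) : ℝ) = (((2 * a + 1 : ℤ)) : ℝ) by
    exact_mod_cast congrArg (fun z : ℤ => (z : ℝ)) (Int.toNat_of_nonneg (by linarith))]
  push_cast; ring

set_option maxHeartbeats 1000000 in
/-- **Contraction and dilation properties of `F_{Λ,α}`.** There are absolute constants
`c', c'' > 0` such that for any full-rank lattice `Λ = B·ℤ^d`, any `α`, any integer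
`N ≥ 1`: (i) for any `c ∈ (10/N, 1)`, `F_{Λ,α}(N) ≥ c' · c · F_{Λ,α}(cN)`; and
(ii) for any integer `q ≥ 1`, `F_{Λ,α}(N) ≥ (c''/q) F_{Λ,q²α}(N/q)`. -/
theorem stmt_12 :
    ∃ c' c'' : ℝ, 0 < c' ∧ 0 < c'' ∧
      ∀ (d : ℕ) (B : Matrix (Fin d) (Fin d) ℝ), B.det ≠ 0 →
        ∀ (α : Fin d → ℝ) (N : ℕ), 1 ≤ N →
          (∀ c : ℝ, 10 / (N : ℝ) < c → c < 1 →
            latticeF B α N ≥ c' * c * latticeF B α (c * N)) ∧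
          (∀ q : ℕ, 1 ≤ q →
            latticeF B α N ≥ (c'' / q) *
              latticeF B (fun i => (q : ℝ) ^ 2 * α i) ((N : ℝ) / q)) := by
  refine ⟨1/3, 1/3, by norm_num, by norm_num, ?_⟩
  intro d B hB α N hN
  have hA : 0 ≤ |B.det| := abs_nonneg _
  have hN0 : (0 : ℝ) < N := by exact_mod_cast hN
  set T : ℤ → ℝ := fun n => ∑' m : Fin d → ℤ,
      Real.exp (-π * normSq (fun i => (n : ℝ) ^ 2 * α i - latticePt B m i)) with hT
  have hTnn : ∀ n, 0 ≤ T n := fun n => tsum_nonneg fun m => (Real.exp_pos _).le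
  -- The big interval for N
  have hceilN : ⌈-(N : ℝ)⌉ = -(N : ℤ) := by rw [Int.ceil_neg, Int.floor_natCast]
  have hfloorN : ⌊(N : ℝ)⌋ = (N : ℤ) := Int.floor_natCast N
  have hFN : latticeF B α N =
      |B.det| * (∑ n ∈ Finset.Icc (-(N : ℤ)) (N : ℤ), T n) /
        ((Finset.Icc (-(N : ℤ)) (N : ℤ)).card) := by
    rw [latticeF, hceilN, hfloorN]
  have hcardN : (((Finset.Icc (-(N : ℤ)) (N : ℤ)).card : ℝ)) = 2 * (N : ℝ) + 1 := by
    rw [card_Icc_neg_real _ (by positivity)]; norm_num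
  constructor
  · -- part (i)
    intro c hc1 hc2
    have hc0 : 0 < c := lt_trans (by positivity) hc1
    set M : ℝ := c * N with hM
    have hM10 : 10 < M := by
      have := (div_lt_iff₀ hN0).mp hc1
      linarith [this]
    have hMN : M < N := by nlinarith
    have hfM0 : (0 : ℤ) ≤ ⌊M⌋ := Int.floor_nonneg.mpr (by linarith)
    have hceilM : ⌈-M⌉ = -⌊M⌋ := Int.ceil_neg
    have hFM : latticeF B α M =
        |B.det| * (∑ n ∈ Finset.Icc (-⌊M⌋) ⌊M⌋, T n) /
          ((Finset.Icc (-⌊M⌋) ⌊M⌋).card) := by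
      rw [latticeF, hceilM]
    have hsub : Finset.Icc (-⌊M⌋) ⌊M⌋ ⊆ Finset.Icc (-(N : ℤ)) (N : ℤ) := by
      apply Finset.Icc_subset_Icc
      · have : ⌊M⌋ ≤ (N : ℤ) := by
          rw [← hfloorN]; exact Int.floor_le_floor hMN.le
        omega
      · rw [← hfloorN]; exact Int.floor_le_floor hMN.le
    have hsle : ∑ n ∈ Finset.Icc (-⌊M⌋) ⌊M⌋, T n ≤
        ∑ n ∈ Finset.Icc (-(N : ℤ)) (N : ℤ), T n :=
      Finset.sum_le_sum_of_subset_of_nonneg hsub (fun n _ _ => hTnn n)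
    have hcardM : (((Finset.Icc (-⌊M⌋) ⌊M⌋).card : ℝ)) = 2 * (⌊M⌋ : ℝ) + 1 :=
      card_Icc_neg_real _ hfM0
    rw [hFN, hFM, ge_iff_le]
    rw [hcardN, hcardM]
    have hfMr : M - 1 < (⌊M⌋ : ℝ) := Int.sub_one_lt_floor M
    have hfMr0 : (0 : ℝ) ≤ (⌊M⌋ : ℝ) := by exact_mod_cast hfM0
    apply key_ineq _ _ _ _ _ _ hA
      (Finset.sum_nonneg fun n _ => hTnn n) hsle (by linarith) (by linarith)
      (by positivity)
    -- (1/3 * c) * (2N+1) ≤ 2⌊M⌋+1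
    nlinarith [hfMr, hM10, hN0, hc0, hc2]
  · -- part (ii)
    intro q hq
    have hq0 : (0 : ℝ) < q := by exact_mod_cast hq
    set K : ℕ := N / q with hK
    have hfloorNq : ⌊(N : ℝ) / (q : ℝ)⌋ = (K : ℤ) := by
      rw [show ((N : ℝ) / (q : ℝ)) = ((((N : ℚ)) / (q : ℚ) : ℚ) : ℝ) by push_cast; ring,
        Rat.floor_cast, Rat.floor_natCast_div_natCast]
      rw [hK]
      exact (Int.natCast_div N q).symm
    have hceilNq : ⌈-((N : ℝ) / (q : ℝ))⌉ = -(K : ℤ) := by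
      rw [Int.ceil_neg, hfloorNq]
    set T' : ℤ → ℝ := fun n => ∑' m : Fin d → ℤ,
        Real.exp (-π * normSq (fun i =>
          (n : ℝ) ^ 2 * ((q : ℝ) ^ 2 * α i) - latticePt B m i)) with hT'
    have hFq : latticeF B (fun i => (q : ℝ) ^ 2 * α i) ((N : ℝ) / q) =
        |B.det| * (∑ n ∈ Finset.Icc (-(K : ℤ)) (K : ℤ), T' n) /
          ((Finset.Icc (-(K : ℤ)) (K : ℤ)).card) := by
      rw [latticeF, hceilNq, hfloorNq]
    have hTT' : ∀ k : ℤ, T' k = T ((q : ℤ) * k) := by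
      intro k
      apply tsum_congr; intro m
      congr 1
      congr 1
      unfold normSq
      apply Finset.sum_congr rfl
      intro i _
      congr 1
      push_cast
      ring
    have hinj : ∀ x ∈ Finset.Icc (-(K : ℤ)) (K : ℤ), ∀ y ∈ Finset.Icc (-(K : ℤ)) (K : ℤ),
        (q : ℤ) * x = (q : ℤ) * y → x = y := by
      intro x _ y _ h
      have hq' : (q : ℤ) ≠ 0 := by exact_mod_cast Nat.one_le_iff_ne_zero.mp hq
      exact mul_left_cancel₀ hq' h
    have himg : (Finset.Icc (-(K : ℤ)) (K : ℤ)).image (fun k => (q : ℤ) * k) ⊆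
        Finset.Icc (-(N : ℤ)) (N : ℤ) := by
      intro n hn
      simp only [Finset.mem_image, Finset.mem_Icc] at hn ⊢
      obtain ⟨k, ⟨hk1, hk2⟩, rfl⟩ := hn
      have hqK : (q : ℤ) * (K : ℤ) ≤ (N : ℤ) := by
        have := Nat.div_mul_le_self N q
        have : q * K ≤ N := by rw [hK, Nat.mul_comm]; exact Nat.div_mul_le_self N q
        exact_mod_cast this
      constructor <;> nlinarith [Int.natCast_nonneg q]
    have hsle : ∑ k ∈ Finset.Icc (-(K : ℤ)) (K : ℤ), T' k ≤
        ∑ n ∈ Finset.Icc (-(N : ℤ)) (N : ℤ), T n := by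
      calc ∑ k ∈ Finset.Icc (-(K : ℤ)) (K : ℤ), T' k
          = ∑ k ∈ Finset.Icc (-(K : ℤ)) (K : ℤ), T ((q : ℤ) * k) :=
            Finset.sum_congr rfl fun k _ => hTT' k
        _ = ∑ n ∈ (Finset.Icc (-(K : ℤ)) (K : ℤ)).image (fun k => (q : ℤ) * k), T n :=
            (Finset.sum_image hinj).symm
        _ ≤ ∑ n ∈ Finset.Icc (-(N : ℤ)) (N : ℤ), T n :=
            Finset.sum_le_sum_of_subset_of_nonneg himg (fun n _ _ => hTnn n)
    have hcardK : (((Finset.Icc (-(K : ℤ)) (K : ℤ)).card : ℝ)) = 2 * (K : ℝ) + 1 := by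
      rw [card_Icc_neg_real _ (by positivity)]; norm_num
    rw [hFN, hFq, ge_iff_le, hcardN, hcardK]
    have hNqK : N < q * K + q := by
      have h1 : q * K + N % q = N := by rw [hK]; exact Nat.div_add_mod N q
      have h2 := Nat.mod_lt N (show 0 < q by omega)
      omega
    have hNqKr : (N : ℝ) < (q : ℝ) * (K : ℝ) + (q : ℝ) := by exact_mod_cast hNqK
    have hK0 : (0 : ℝ) ≤ (K : ℝ) := Nat.cast_nonneg K
    have hD : (0:ℝ) < 2 * (N : ℝ) + 1 := by linarith
    have hD' : (0:ℝ) < 2 * (K : ℝ) + 1 := by linarith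
    have ht : (0:ℝ) ≤ 1/3 / (q : ℝ) := div_nonneg (by norm_num) hq0.le
    have harith : 1/3 / (q : ℝ) * (2 * (N : ℝ) + 1) ≤ 2 * (K : ℝ) + 1 := by
      have hq1 : (1:ℝ) ≤ (q:ℝ) := by exact_mod_cast hq
      rw [div_mul_eq_mul_div, div_le_iff₀ hq0]
      nlinarith [mul_nonneg hq0.le hK0, hNqKr, hq1]
    exact key_ineq _ _ _ _ _ _ hA
      (Finset.sum_nonneg fun n _ => by rw [hTT' n]; exact hTnn _) hsle hD hD' ht harith
end

section
/- Let $P = \{a, a+r, \ldots, a+(k-1)r\}$ be an arithmetic progression of integers, and let $\phi(n) = \alpha n^2 + \beta n + \gamma$ (mod 1) for reals $\alpha, \beta, \gamma$. Suppose the coefficient of $t^2$ in $\psi(t) := \phi(a + tr)$ has absolute fractional part at most $A/k^2$ and the coefficient of $t$ has absolute fractional part at most $A/k$, for some $A \ge 1$. Then for any $\theta \in \mathbb{R}/\mathbb{Z}$ and $\varepsilon > 0$, the set $\{t \in \{1, \ldots, k\} : \|\psi(t) - \theta\|_{\mathbb{R}/\mathbb{Z}} < \varepsilon\}$ is a union of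 at most $O(A)$ intervals of consecutive integers. -/
open Finset

/-- The distance from a real number to the nearest integer. -/
noncomputable def distToInt (x : ℝ) : ℝ := |x - round x|

lemma distToInt_le (x : ℝ) (n : ℤ) : distToInt x ≤ |x - n| := by
  unfold distToInt
  by_cases h : n = round x
  · rw [h]
  · have h0 : round x - n ≠ 0 := sub_ne_zero.mpr (Ne.symm h)
    have h1 : (1:ℝ) ≤ |(round x : ℝ) - n| := by
      have := Int.one_le_abs h0
      calc (1:ℝ) ≤ ((|round x - n| : ℤ) : ℝ) := by exact_mod_cast this
        _ = |(round x : ℝ) - n| := by push_cast; ring_nf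
    have h2 : |x - round x| ≤ 1/2 := abs_sub_round x
    have h3 : |(round x:ℝ) - n| ≤ |(round x:ℝ) - x| + |x - n| := abs_sub_le _ _ _
    have h4 : |(round x:ℝ) - x| = |x - round x| := abs_sub_comm _ _
    linarith

lemma distToInt_add_int (x : ℝ) (m : ℤ) : distToInt (x + m) = distToInt x := by
  apply le_antisymm
  · calc distToInt (x + m) ≤ |x + m - ((round x + m : ℤ):ℝ)| := distToInt_le _ _
      _ = |x - round x| := by push_cast; ring_nf
      _ = distToInt x := rfl
  · calc distToInt x ≤ |x - ((round (x + (m:ℝ)) - m : ℤ) : ℝ)| := distToInt_le _ _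
      _ = |x + m - round (x + (m:ℝ))| := by push_cast; ring_nf
      _ = distToInt (x + m) := rfl

lemma distToInt_neg (x : ℝ) : distToInt (-x) = distToInt x := by
  have key : ∀ y : ℝ, distToInt (-y) ≤ distToInt y := by
    intro y
    calc distToInt (-y) ≤ |(-y) - ((-round y : ℤ):ℝ)| := distToInt_le _ _
      _ = |y - round y| := by push_cast; rw [← abs_neg]; ring_nf
      _ = distToInt y := rfl
  refine le_antisymm (key x) ?_
  simpa using key (-x)

lemma decomp (k : ℤ) (S : Finset ℤ) (hS : S ⊆ Icc 1 k) :
    ∃ I : Fin (S.filter (fun t => t - 1 ∉ S)).card → Finset ℤ,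
      (∀ i, ∃ u v : ℤ, I i = Icc u v) ∧ S = Finset.univ.biUnion I := by
  classical
  set B := S.filter (fun t => t - 1 ∉ S) with hB
  set R : ℤ → Finset ℤ := fun t => S.filter (fun u => t ≤ u ∧ ∀ v ∈ Icc t u, v ∈ S) with hR
  have hRmem : ∀ t ∈ S, t ∈ R t := by
    intro t ht
    rw [hR, mem_filter]
    refine ⟨ht, le_refl t, fun v hv => ?_⟩
    have : v = t := by have := mem_Icc.mp hv; omega
    rwa [this]
  have hRicc : ∀ t ∈ S, ∃ u v : ℤ, R t = Icc u v := by
    intro t ht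
    have hne : (R t).Nonempty := ⟨t, hRmem t ht⟩
    refine ⟨t, (R t).max' hne, ?_⟩
    have hmax : (R t).max' hne ∈ R t := (R t).max'_mem hne
    obtain ⟨-, htm, hIm⟩ := mem_filter.mp hmax
    ext u
    rw [mem_Icc]
    constructor
    · intro hu'
      obtain ⟨hu, htu, hIu⟩ := mem_filter.mp hu'
      exact ⟨htu, le_max' _ u hu'⟩
    · rintro ⟨htu, hum⟩
      apply mem_filter.mpr
      have huS : u ∈ S := hIm u (mem_Icc.mpr ⟨htu, hum⟩)
      refine ⟨huS, htu, fun v hv => ?_⟩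
      have hv' := mem_Icc.mp hv
      exact hIm v (mem_Icc.mpr ⟨hv'.1, le_trans hv'.2 hum⟩)
  refine ⟨fun i => R ((B.equivFin.symm i) : ℤ), ?_, ?_⟩
  · intro i
    have hb := mem_filter.mp (B.equivFin.symm i).2
    simpa using hRicc _ hb.1
  · ext s
    rw [mem_biUnion]
    constructor
    · intro hs
      have hs1 : (1:ℤ) ≤ s := (mem_Icc.mp (hS hs)).1
      set T := (Icc 1 s).filter (fun b => ∀ v ∈ Icc b s, v ∈ S) with hT
      have hsT : s ∈ T := by
        rw [hT, mem_filter, mem_Icc]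
        refine ⟨⟨hs1, le_refl s⟩, fun v hv => ?_⟩
        have : v = s := by have := mem_Icc.mp hv; omega
        rwa [this]
      have hTne : T.Nonempty := ⟨s, hsT⟩
      set b := T.min' hTne with hb
      have hbT : b ∈ T := T.min'_mem hTne
      rw [hT, mem_filter, mem_Icc] at hbT
      obtain ⟨⟨hb1, hbs⟩, hbIcc⟩ := hbT
      have hbS : b ∈ S := hbIcc b (mem_Icc.mpr ⟨le_refl b, hbs⟩)
      have hbB : b ∈ B := by
        rw [hB, mem_filter]
        refine ⟨hbS, fun hb1S => ?_⟩
        have hmem : b - 1 ∈ T := by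
          rw [hT, mem_filter, mem_Icc]
          refine ⟨⟨(mem_Icc.mp (hS hb1S)).1, by omega⟩, fun v hv => ?_⟩
          have hv' := mem_Icc.mp hv
          rcases eq_or_lt_of_le hv'.1 with h | h
          · rwa [← h]
          · exact hbIcc v (mem_Icc.mpr ⟨by omega, hv'.2⟩)
        have := T.min'_le _ hmem
        omega
      refine ⟨B.equivFin ⟨b, hbB⟩, mem_univ _, ?_⟩
      have heq : ((B.equivFin.symm (B.equivFin ⟨b, hbB⟩)) : ℤ) = b := by
        rw [Equiv.symm_apply_apply]
      rw [heq]
      apply mem_filter.mpr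
      exact ⟨hs, hbs, hbIcc⟩
    · rintro ⟨i, -, hi⟩
      exact (mem_filter.mp hi).1
set_option maxHeartbeats 1000000 in
lemma core (k : ℤ) (hk : 1 ≤ k) (d2 d1 d0 A θ ε : ℝ) (hA : 1 ≤ A)
    (hd2 : 0 ≤ d2) (h2 : d2 ≤ A / (k:ℝ)^2) (h1 : |d1| ≤ A / (k:ℝ)) :
    ((((Icc (1:ℤ) k).filter
        (fun t : ℤ => distToInt (d2*(t:ℝ)^2 + d1*(t:ℝ) + d0 - θ) < ε)).filter
      (fun t : ℤ => t - 1 ∉ (Icc (1:ℤ) k).filter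
        (fun t : ℤ => distToInt (d2*(t:ℝ)^2 + d1*(t:ℝ) + d0 - θ) < ε))).card : ℝ)
      ≤ 19 * A := by
  classical
  have hkR : (1:ℝ) ≤ (k:ℝ) := by exact_mod_cast hk
  have hk2 : (0:ℝ) < (k:ℝ)^2 := by positivity
  have hd2k : d2 * (k:ℝ)^2 ≤ A := by
    rw [le_div_iff₀ hk2] at h2; exact h2
  have hd1k : |d1| * (k:ℝ) ≤ A := by
    rw [le_div_iff₀ (by linarith : (0:ℝ) < (k:ℝ))] at h1; exact h1
  set S := (Icc (1:ℤ) k).filter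
    (fun t : ℤ => distToInt (d2*(t:ℝ)^2 + d1*(t:ℝ) + d0 - θ) < ε) with hSdef
  set B := S.filter (fun t : ℤ => t - 1 ∉ S) with hBdef
  by_cases hε : ε ≤ 1/2
  swap
  · have hB1 : B ⊆ {1} := by
      intro t ht
      obtain ⟨htS, htp⟩ := mem_filter.mp ht
      have htIcc := mem_Icc.mp (mem_filter.mp htS).1
      rw [mem_singleton]
      by_contra hne
      apply htp
      apply mem_filter.mpr
      refine ⟨mem_Icc.mpr (by omega), ?_⟩
      calc distToInt _ ≤ 1/2 := abs_sub_round _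
        _ < ε := by linarith
    have h := Finset.card_le_card hB1
    simp only [card_singleton] at h
    have h' : (B.card : ℝ) ≤ 1 := by exact_mod_cast h
    linarith
  · -- main case : ε ≤ 1/2
    set f : ℤ → ℤ := fun t => round (d2*(t:ℝ)^2 + d1*(t:ℝ) + d0 - θ) with hfdef
    set c : ℤ := round (d2*(1:ℝ)^2 + d1*1 + d0 - θ) with hcdef
    set M : ℤ := ⌈2*A⌉ + 1 with hMdef
    have hceil : (2:ℝ)*A ≤ (⌈2*A⌉ : ℝ) := Int.le_ceil _
    have hceil2 : (⌈2*A⌉ : ℝ) < 2*A + 1 := Int.ceil_lt_add_one _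
    have hdist : ∀ t, t ∈ S →
        |d2*(t:ℝ)^2 + d1*(t:ℝ) + d0 - θ - ((f t : ℤ):ℝ)| < ε := by
      intro t ht
      exact (mem_filter.mp ht).2
    have hmaps : ∀ t ∈ S, f t ∈ Icc (c - M) (c + M) := by
      intro t ht
      obtain ⟨htI, -⟩ := mem_filter.mp ht
      have htIcc := mem_Icc.mp htI
      have ht1 : (1:ℝ) ≤ (t:ℝ) := by exact_mod_cast htIcc.1
      have htk : (t:ℝ) ≤ (k:ℝ) := by exact_mod_cast htIcc.2
      have hvar : |(d2*(t:ℝ)^2 + d1*(t:ℝ) + d0 - θ) - (d2*(1:ℝ)^2 + d1*1 + d0 - θ)| ≤ 2*A := by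
        have heq : (d2*(t:ℝ)^2 + d1*(t:ℝ) + d0 - θ) - (d2*(1:ℝ)^2 + d1*1 + d0 - θ)
            = d2*((t:ℝ)^2-1) + d1*((t:ℝ)-1) := by ring
        rw [heq]
        have e1 : |d1*((t:ℝ)-1)| ≤ A := by
          rw [abs_mul]
          have habs : |(t:ℝ)-1| ≤ (k:ℝ) := by
            rw [abs_of_nonneg (by linarith)]; linarith
          nlinarith [abs_nonneg d1]
        have e2 : |d2*((t:ℝ)^2-1)| ≤ A := by
          rw [abs_mul, abs_of_nonneg hd2]
          have habs : |(t:ℝ)^2-1| ≤ (k:ℝ)^2 := by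
            rw [abs_of_nonneg (by nlinarith)]; nlinarith
          nlinarith
        calc |d2*((t:ℝ)^2-1) + d1*((t:ℝ)-1)| ≤ |d2*((t:ℝ)^2-1)| + |d1*((t:ℝ)-1)| :=
              abs_add_le _ _
          _ ≤ 2*A := by linarith
      have hr1 : |(d2*(t:ℝ)^2 + d1*(t:ℝ) + d0 - θ) - ((f t:ℤ):ℝ)| ≤ 1/2 :=
        abs_sub_round _
      have hr2 : |(d2*(1:ℝ)^2 + d1*1 + d0 - θ) - ((c:ℤ):ℝ)| ≤ 1/2 := abs_sub_round _
      have hfc : |(f t : ℝ) - (c:ℝ)| ≤ 2*A + 1 := by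
        have a1 := abs_le.mp hvar
        have a2 := abs_le.mp hr1
        have a3 := abs_le.mp hr2
        rw [abs_le]; constructor <;> linarith
      have hMR : |(f t : ℝ) - (c:ℝ)| ≤ (M:ℝ) := by
        have : (2:ℝ)*A + 1 ≤ (M:ℝ) := by
          rw [hMdef]; push_cast; linarith
        linarith
      have hZ : |f t - c| ≤ M := by
        have : |((f t - c : ℤ) : ℝ)| ≤ (M:ℝ) := by push_cast; exact hMR
        exact_mod_cast this
      rw [mem_Icc]
      have := abs_le.mp hZ
      omega
    have claim_pos : ∀ t t' : ℤ, t ∈ S → t' ∈ S → t < t' →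
        0 ≤ d2*(2*(t:ℝ)-1)+d1 → f t = f t' → (t'-1) ∈ S := by
      intro t t' ht ht' htt hpos heq
      have hdt := hdist t ht
      have hdt' := hdist t' ht'
      have htIcc := mem_Icc.mp (mem_filter.mp ht).1
      have htIcc' := mem_Icc.mp (mem_filter.mp ht').1
      have httR : (t:ℝ) + 1 ≤ (t':ℝ) := by exact_mod_cast htt
      have ht1 : (1:ℝ) ≤ (t:ℝ) := by exact_mod_cast htIcc.1
      have hq : (0:ℝ) ≤ d2*((t':ℝ)-(t:ℝ)) :=
        mul_nonneg hd2 (by linarith)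
      have hfac : (0:ℝ) ≤ d2*(((t':ℝ)-1)+(t:ℝ))+d1 := by linarith
      have hprod : (0:ℝ) ≤ (((t':ℝ)-1)-(t:ℝ)) * (d2*(((t':ℝ)-1)+(t:ℝ))+d1) :=
        mul_nonneg (by linarith) hfac
      have hAB : d2*(t:ℝ)^2 + d1*(t:ℝ) ≤ d2*((t':ℝ)-1)^2 + d1*((t':ℝ)-1) := by
        have hid : d2*((t':ℝ)-1)^2 + d1*((t':ℝ)-1) - (d2*(t:ℝ)^2 + d1*(t:ℝ))
            = (((t':ℝ)-1)-(t:ℝ)) * (d2*(((t':ℝ)-1)+(t:ℝ))+d1) := by ring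
        linarith [hprod, hid]
      have hBC : d2*((t':ℝ)-1)^2 + d1*((t':ℝ)-1) ≤ d2*(t':ℝ)^2 + d1*(t':ℝ) := by
        have hid : d2*(t':ℝ)^2 + d1*(t':ℝ) - (d2*((t':ℝ)-1)^2 + d1*((t':ℝ)-1))
            = d2*(2*(t':ℝ)-1)+d1 := by ring
        linarith [hq, hpos, hid]
      have hN : |d2*((t':ℝ)-1)^2 + d1*((t':ℝ)-1) + d0 - θ - ((f t:ℤ):ℝ)| < ε := by
        rw [← heq] at hdt'
        have a1 := abs_lt.mp hdt
        have a2 := abs_lt.mp hdt'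
        rw [abs_lt]
        constructor <;> [linarith; linarith]
      apply mem_filter.mpr
      have hcast : ((t' - 1 : ℤ) : ℝ) = (t':ℝ) - 1 := by push_cast; ring
      refine ⟨mem_Icc.mpr (by omega), ?_⟩
      rw [hcast]
      calc distToInt (d2*((t':ℝ)-1)^2 + d1*((t':ℝ)-1) + d0 - θ)
          ≤ |d2*((t':ℝ)-1)^2 + d1*((t':ℝ)-1) + d0 - θ - ((f t : ℤ):ℝ)| :=
            distToInt_le _ _
        _ < ε := hN
    have claim_neg : ∀ t t' : ℤ, t ∈ S → t' ∈ S → t < t' →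
        d2*(2*(t':ℝ)-1)+d1 < 0 → f t = f t' → (t'-1) ∈ S := by
      intro t t' ht ht' htt hneg heq
      have hdt := hdist t ht
      have hdt' := hdist t' ht'
      have htIcc := mem_Icc.mp (mem_filter.mp ht).1
      have htIcc' := mem_Icc.mp (mem_filter.mp ht').1
      have httR : (t:ℝ) + 1 ≤ (t':ℝ) := by exact_mod_cast htt
      have ht1 : (1:ℝ) ≤ (t:ℝ) := by exact_mod_cast htIcc.1
      have hq : (0:ℝ) ≤ d2*((t':ℝ)-(t:ℝ)) :=
        mul_nonneg hd2 (by linarith)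
      have hfac : d2*(((t':ℝ)-1)+(t:ℝ))+d1 ≤ 0 := by linarith
      have hprod : (0:ℝ) ≤ (((t':ℝ)-1)-(t:ℝ)) * (-(d2*(((t':ℝ)-1)+(t:ℝ))+d1)) :=
        mul_nonneg (by linarith) (by linarith)
      have hAB : d2*((t':ℝ)-1)^2 + d1*((t':ℝ)-1) ≤ d2*(t:ℝ)^2 + d1*(t:ℝ) := by
        have hid : d2*(t:ℝ)^2 + d1*(t:ℝ) - (d2*((t':ℝ)-1)^2 + d1*((t':ℝ)-1))
            = (((t':ℝ)-1)-(t:ℝ)) * (-(d2*(((t':ℝ)-1)+(t:ℝ))+d1)) := by ring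
        linarith [hprod, hid]
      have hBC : d2*(t':ℝ)^2 + d1*(t':ℝ) ≤ d2*((t':ℝ)-1)^2 + d1*((t':ℝ)-1) := by
        have hid : d2*(t':ℝ)^2 + d1*(t':ℝ) - (d2*((t':ℝ)-1)^2 + d1*((t':ℝ)-1))
            = d2*(2*(t':ℝ)-1)+d1 := by ring
        linarith [hneg, hid]
      have hN : |d2*((t':ℝ)-1)^2 + d1*((t':ℝ)-1) + d0 - θ - ((f t:ℤ):ℝ)| < ε := by
        rw [← heq] at hdt'
        have a1 := abs_lt.mp hdt
        have a2 := abs_lt.mp hdt'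
        rw [abs_lt]
        constructor <;> [linarith; linarith]
      apply mem_filter.mpr
      have hcast : ((t' - 1 : ℤ) : ℝ) = (t':ℝ) - 1 := by push_cast; ring
      refine ⟨mem_Icc.mpr (by omega), ?_⟩
      rw [hcast]
      calc distToInt (d2*((t':ℝ)-1)^2 + d1*((t':ℝ)-1) + d0 - θ)
          ≤ |d2*((t':ℝ)-1)^2 + d1*((t':ℝ)-1) + d0 - θ - ((f t : ℤ):ℝ)| :=
            distToInt_le _ _
        _ < ε := hN
    -- split B into two monotone parts
    set Bp := B.filter (fun t : ℤ => 0 ≤ d2*(2*(t:ℝ)-1)+d1) with hBp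
    set Bm := B.filter (fun t : ℤ => ¬ 0 ≤ d2*(2*(t:ℝ)-1)+d1) with hBm
    have hBsubS : ∀ t ∈ B, t ∈ S := fun t ht => (mem_filter.mp ht).1
    have hinj_p : Set.InjOn f ↑Bp := by
      intro t ht t' ht' heq
      rw [Finset.mem_coe] at ht ht'
      obtain ⟨htB, htc⟩ := mem_filter.mp ht
      obtain ⟨htB', htc'⟩ := mem_filter.mp ht'
      by_contra hne
      rcases lt_or_gt_of_ne hne with h | h
      · exact (mem_filter.mp htB').2 (claim_pos t t' (hBsubS t htB) (hBsubS t' htB') h htc heq)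
      · exact (mem_filter.mp htB).2 (claim_pos t' t (hBsubS t' htB') (hBsubS t htB) h htc' heq.symm)
    have hinj_m : Set.InjOn f ↑Bm := by
      intro t ht t' ht' heq
      rw [Finset.mem_coe] at ht ht'
      obtain ⟨htB, htc⟩ := mem_filter.mp ht
      obtain ⟨htB', htc'⟩ := mem_filter.mp ht'
      by_contra hne
      rcases lt_or_gt_of_ne hne with h | h
      · exact (mem_filter.mp htB').2 (claim_neg t t' (hBsubS t htB) (hBsubS t' htB') h (not_le.mp htc') heq)
      · exact (mem_filter.mp htB).2 (claim_neg t' t (hBsubS t' htB') (hBsubS t htB) h (not_le.mp htc) heq.symm)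
    have hIccCard : ((Icc (c - M) (c + M)).card : ℝ) ≤ 9 * A := by
      rw [Int.card_Icc]
      have h0 : (0:ℤ) ≤ 2*M + 1 := by
        have : (0:ℤ) ≤ ⌈2*A⌉ := Int.ceil_nonneg (by linarith)
        omega
      have hT : (c + M + 1 - (c - M)) = 2*M+1 := by ring
      rw [hT]
      have hcast : (((2*M+1).toNat : ℕ) : ℝ) = ((2*M+1 : ℤ):ℝ) := by
        exact_mod_cast Int.toNat_of_nonneg h0
      rw [hcast]
      have : ((2*M+1 : ℤ):ℝ) = 2*(⌈2*A⌉:ℝ) + 3 := by rw [hMdef]; push_cast; ring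
      rw [this]
      linarith
    have hcard_p : ((Bp.card : ℕ) : ℝ) ≤ 9*A := by
      have := Finset.card_le_card_of_injOn f
        (fun t ht => hmaps t (hBsubS t (mem_filter.mp ht).1)) hinj_p
      calc ((Bp.card : ℕ):ℝ) ≤ ((Icc (c - M) (c + M)).card : ℝ) := Nat.cast_le.mpr this
        _ ≤ 9*A := hIccCard
    have hcard_m : ((Bm.card : ℕ) : ℝ) ≤ 9*A := by
      have := Finset.card_le_card_of_injOn f
        (fun t ht => hmaps t (hBsubS t (mem_filter.mp ht).1)) hinj_m
      calc ((Bm.card : ℕ):ℝ) ≤ ((Icc (c - M) (c + M)).card : ℝ) := Nat.cast_le.mpr this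
        _ ≤ 9*A := hIccCard
    have hunion : Bp ∪ Bm = B := by
      rw [hBp, hBm]; exact Finset.filter_union_filter_not_eq _ B
    have hsplit : B.card ≤ Bp.card + Bm.card := by
      rw [← hunion]; exact Finset.card_union_le _ _
    have : (B.card : ℝ) ≤ 18 * A := by
      have hs : ((B.card : ℕ):ℝ) ≤ ((Bp.card + Bm.card : ℕ):ℝ) := by exact_mod_cast hsplit
      push_cast at hs
      linarith
    linarith

/-- **Level sets of a slowly varying quadratic phase are few intervals.** There is an
absolute constant `C > 0` such that: if `ψ(t) = φ(a + tr)` for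
`φ(n) = αn² + βn + γ`, the coefficient `αr²` of `t²` is within `A/k²` of an integer and
the coefficient `2αar + βr` of `t` is within `A/k` of an integer (`A ≥ 1`), then for any
`θ` and `ε > 0` the set `{t ∈ {1,…,k} : ‖ψ(t) - θ‖_{ℝ/ℤ} < ε}` is a union of at most
`C·A` intervals of consecutive integers. -/
theorem stmt_16 :
    ∃ C : ℝ, 0 < C ∧
      ∀ (a r : ℤ) (k : ℕ), 1 ≤ k → ∀ (α β γ A : ℝ), 1 ≤ A →
        distToInt (α * (r : ℝ) ^ 2) ≤ A / (k : ℝ) ^ 2 →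
        distToInt (2 * α * (a : ℝ) * (r : ℝ) + β * (r : ℝ)) ≤ A / (k : ℝ) →
        ∀ (θ ε : ℝ), 0 < ε →
          ∃ (l : ℕ), (l : ℝ) ≤ C * A ∧
            ∃ I : Fin l → Finset ℤ,
              (∀ i, ∃ u v : ℤ, I i = Finset.Icc u v) ∧
              (Finset.Icc (1 : ℤ) (k : ℤ)).filter
                  (fun t : ℤ => distToInt (α * ((a : ℝ) + (t : ℝ) * r) ^ 2 +
                    β * ((a : ℝ) + (t : ℝ) * r) + γ - θ) < ε) =
                Finset.univ.biUnion I := by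
  classical
  refine ⟨19, by norm_num, ?_⟩
  intro a r k hk α β γ A hA h2 h1 θ ε hε
  have hkZ : (1:ℤ) ≤ (k:ℤ) := by exact_mod_cast hk
  -- reduce the phase to a quadratic with small nonnegative leading coefficient
  have key : ∃ d2 d1 dd θ', 0 ≤ d2 ∧ d2 ≤ A/(((k:ℤ)):ℝ)^2 ∧ |d1| ≤ A/(((k:ℤ)):ℝ) ∧
      ∀ t : ℤ, distToInt (α * ((a : ℝ) + (t : ℝ) * r) ^ 2 +
        β * ((a : ℝ) + (t : ℝ) * r) + γ - θ)
        = distToInt (d2*(t:ℝ)^2 + d1*(t:ℝ) + dd - θ') := by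
    set c2 : ℝ := α * (r : ℝ) ^ 2 with hc2
    set c1 : ℝ := 2 * α * (a : ℝ) * (r : ℝ) + β * (r : ℝ) with hc1
    set m2 : ℤ := round c2 with hm2
    set m1 : ℤ := round c1 with hm1
    have hδ2 : |c2 - (m2:ℝ)| ≤ A / (k:ℝ)^2 := h2
    have hδ1 : |c1 - (m1:ℝ)| ≤ A / (k:ℝ) := h1
    have hkcast : (((k:ℤ)):ℝ) = (k:ℝ) := by push_cast; ring
    have hbase : ∀ t : ℤ, α * ((a : ℝ) + (t : ℝ) * r) ^ 2 +
        β * ((a : ℝ) + (t : ℝ) * r) + γ - θ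
        = ((c2 - m2)*(t:ℝ)^2 + (c1 - m1)*(t:ℝ) + (α*(a:ℝ)^2 + β*(a:ℝ) + γ) - θ)
          + ((m2*t^2 + m1*t : ℤ):ℝ) := by
      intro t
      rw [hc2, hc1]
      push_cast
      ring
    by_cases hsign : 0 ≤ c2 - (m2:ℝ)
    · refine ⟨c2 - m2, c1 - m1, α*(a:ℝ)^2 + β*(a:ℝ) + γ, θ, hsign, ?_, ?_, ?_⟩
      · rw [hkcast]; calc c2 - (m2:ℝ) ≤ |c2 - (m2:ℝ)| := le_abs_self _
          _ ≤ _ := hδ2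
      · rw [hkcast]; exact hδ1
      · intro t
        rw [hbase t, distToInt_add_int]
    · refine ⟨-(c2 - m2), -(c1 - m1), -(α*(a:ℝ)^2 + β*(a:ℝ) + γ), -θ, by linarith, ?_, ?_, ?_⟩
      · rw [hkcast]
        calc -(c2 - (m2:ℝ)) ≤ |c2 - (m2:ℝ)| := neg_le_abs _
          _ ≤ _ := hδ2
      · rw [hkcast, abs_neg]; exact hδ1
      · intro t
        rw [hbase t, distToInt_add_int]
        have hneg : -(c2 - m2)*(t:ℝ)^2 + -(c1 - m1)*(t:ℝ) + -(α*(a:ℝ)^2 + β*(a:ℝ) + γ) - -θ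
            = -((c2 - m2)*(t:ℝ)^2 + (c1 - m1)*(t:ℝ) + (α*(a:ℝ)^2 + β*(a:ℝ) + γ) - θ) := by
          ring
        rw [hneg, distToInt_neg]
  obtain ⟨d2, d1, dd, θ', hd2, h2', h1', hpred⟩ := key
  have hfilt : (Finset.Icc (1 : ℤ) (k : ℤ)).filter
      (fun t : ℤ => distToInt (α * ((a : ℝ) + (t : ℝ) * r) ^ 2 +
        β * ((a : ℝ) + (t : ℝ) * r) + γ - θ) < ε)
      = (Finset.Icc (1 : ℤ) (k : ℤ)).filter
      (fun t : ℤ => distToInt (d2*(t:ℝ)^2 + d1*(t:ℝ) + dd - θ') < ε) := by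
    apply filter_congr
    intro t ht
    rw [hpred t]
  set S := (Finset.Icc (1 : ℤ) (k : ℤ)).filter
      (fun t : ℤ => distToInt (d2*(t:ℝ)^2 + d1*(t:ℝ) + dd - θ') < ε) with hSdef
  refine ⟨(S.filter (fun t => t - 1 ∉ S)).card, ?_, ?_⟩
  · have := core (k:ℤ) hkZ d2 d1 dd A θ' ε hA hd2 h2' h1'
    calc ((S.filter (fun t => t - 1 ∉ S)).card : ℝ) ≤ 19 * A := this
      _ = 19 * A := rfl
  · obtain ⟨I, hIicc, hIun⟩ := decomp (k:ℤ) S (filter_subset _ _)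
    exact ⟨I, hIicc, by rw [hfilt]; exact hIun⟩
end
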